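/- For every integer n ≥ 0 with W(n+1) ≥ 5, one has q_n + 1.6·e^{−2·W(n+1)} ≤ 1. -/

import Mathlib

/-- Principal branch of the Lambert W function on `[0, ∞)`: for `x ≥ 0`,
`lambertW x` is the unique `y ≥ 0` with `y * exp y = x`. -/
noncomputable def lambertW (x : ℝ) : ℝ := Function.invFun (fun y : ℝ => y * Real.exp y) x

/-- `q n = 1 - e^{-R} (1 - 3/(2R) - 10/R² - 9/R³ + 1/R⁴) / (12 (1 + 1/R)³)` with `R = W(n+1)`. -/
noncomputable def q (n : ℕ) : ℝ :=
  1 - Real.exp (-(lambertW (n + 1))) *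
      (1 - 3 / (2 * lambertW (n + 1)) - 10 / (lambertW (n + 1)) ^ 2
        - 9 / (lambertW (n + 1)) ^ 3 + 1 / (lambertW (n + 1)) ^ 4) /
    (12 * (1 + 1 / (lambertW (n + 1))) ^ 3)

/-!
With `R = W(n+1) ≥ 5` everything is a crude numerical estimate in `R` alone: `e^{-R} ≤ e^{-5} ≤ 1/148`,
the bracket `1 - 3/(2R) - 10/R² - 9/R³ + 1/R⁴` is at least `0.228`, and `12 (1 + 1/R)³ ≤ 12 · 1.2³ = 20.736`.
Since `e^{-2R} = e^{-R} · e^{-R}`, the claim reduces to `1.6 · e^{-R} · 12 (1 + 1/R)³ ≤ 0.228`,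
and `1.6 · 20.736 / 148 < 0.2242`.
-/

open Real

lemma exp_five_ge_148 : (148 : ℝ) ≤ exp 5 := by
  have h : exp 5 = exp 1 ^ 5 := by rw [← exp_nat_mul]; norm_num
  calc (148 : ℝ) ≤ 2.7182818283 ^ 5 := by norm_num
    _ ≤ exp 1 ^ 5 := pow_le_pow_left₀ (by norm_num) exp_one_gt_d9.le 5
    _ = exp 5 := h.symm

lemma exp_neg_le_of_five_le {R : ℝ} (hR : 5 ≤ R) : exp (-R) ≤ 1 / 148 :=
  calc exp (-R) ≤ exp (-5) := exp_le_exp.2 (by linarith)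
    _ = 1 / exp 5 := by rw [exp_neg, one_div]
    _ ≤ 1 / 148 := one_div_le_one_div_of_le (by norm_num) exp_five_ge_148

lemma bracket_ge_of_five_le {R : ℝ} (hR : 5 ≤ R) :
    (0.228 : ℝ) ≤ 1 - 3 / (2 * R) - 10 / R ^ 2 - 9 / R ^ 3 + 1 / R ^ 4 := by
  have hR0 : 0 < R := by linarith
  have h1 : 3 / (2 * R) ≤ 3 / 10 := div_le_div_of_nonneg_left (by norm_num) (by norm_num) (by linarith)
  have h2 : 10 / R ^ 2 ≤ 10 / 5 ^ 2 :=
    div_le_div_of_nonneg_left (by norm_num) (by norm_num) (pow_le_pow_left₀ (by norm_num) hR 2)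
  have h3 : 9 / R ^ 3 ≤ 9 / 5 ^ 3 :=
    div_le_div_of_nonneg_left (by norm_num) (by norm_num) (pow_le_pow_left₀ (by norm_num) hR 3)
  have h4 : (0 : ℝ) ≤ 1 / R ^ 4 := by positivity
  norm_num at h2 h3
  linarith

lemma denominator_le_of_five_le {R : ℝ} (hR : 5 ≤ R) : 12 * (1 + 1 / R) ^ 3 ≤ (20.736 : ℝ) := by
  have hinv : 1 / R ≤ 1 / 5 := one_div_le_one_div_of_le (by norm_num) hR
  have hinv0 : 0 ≤ 1 / R := by positivity
  have hcube : (1 + 1 / R) ^ 3 ≤ (1.2 : ℝ) ^ 3 := pow_le_pow_left₀ (by linarith) (by linarith) 3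
  norm_num at hcube ⊢
  linarith

lemma correction_le_of_five_le {R : ℝ} (hR : 5 ≤ R) :
    1.6 * exp (-2 * R) ≤
      exp (-R) * (1 - 3 / (2 * R) - 10 / R ^ 2 - 9 / R ^ 3 + 1 / R ^ 4) / (12 * (1 + 1 / R) ^ 3) := by
  have hE := exp_neg_le_of_five_le hR
  have hP := bracket_ge_of_five_le hR
  have hD := denominator_le_of_five_le hR
  have hR0 : 0 < R := by linarith
  have hD0 : 0 < 12 * (1 + 1 / R) ^ 3 := by positivity
  set E := exp (-R)
  set P := 1 - 3 / (2 * R) - 10 / R ^ 2 - 9 / R ^ 3 + 1 / R ^ 4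
  set D := 12 * (1 + 1 / R) ^ 3
  have hE0 : 0 < E := exp_pos _
  have hkey : 1.6 * E * D ≤ P :=
    calc 1.6 * E * D ≤ 1.6 * (1 / 148) * 20.736 := by gcongr
      _ ≤ P := by linarith
  have hsq : exp (-2 * R) = E * E := by rw [← exp_add]; ring_nf
  rw [hsq, le_div_iff₀ hD0]
  calc 1.6 * (E * E) * D = E * (1.6 * E * D) := by ring
    _ ≤ E * P := mul_le_mul_of_nonneg_left hkey hE0.le

theorem stmt_12 (n : ℕ) (h : 5 ≤ lambertW (n + 1)) :
    q n + 1.6 * Real.exp (-2 * lambertW (n + 1)) ≤ 1 := by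
  have hcorr := correction_le_of_five_le h
  rw [q]
  linarith
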